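/- Let N ≥ 1 and let A ∈ ℝ^{N×N} be a real symmetric matrix such that E − 2A has eigenvalues 2, 4, …, 2N (counted with multiplicity). Then for all c > 0 and t > 0, ∫₀ᵗ exp( 2 ln((t + c²)/(s + c²)) · A ) ds = (t + c²) · (E − 2A)⁻¹ · ( E − exp( ln(c²/(t + c²)) · (E − 2A) ) ), and this symmetric matrix has eigenvalues λ_k = (1/(2k)) · ((t + c²)^{2k} − c^{4k}) / (t + c²)^{2k−1} for k = 1,…,N. -/

import Mathlib

/-!
All matrices involved are functions of the symmetric matrix `A`, so by the spectral theorem the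
claims reduce to scalar statements about an eigenvalue `x` of `A`, i.e. about the eigenvalue
`μ = 1 - 2x` of `E - 2A`. The scalar integrand `((t + c²)/(s + c²))^(2x)` has the antiderivative
`(t + c²) μ⁻¹ ((s + c²)/(t + c²))^μ`, so both sides of the integral identity are
`g(E - 2A)` for `g(μ) = (t + c²) μ⁻¹ (1 - (c²/(t + c²))^μ)`. This needs `μ ≠ 0`, which holds as the
eigenvalues of `E - 2A` are `2k > 0`, and the eigenvalues of `g(E - 2A)` are then the `g(2k)`.
-/

open Polynomial Real Set

theorem Polynomial.prod_X_sub_C_comp_eq_of_eq {ι κ R : Type*} [CommRing R] [IsDomain R]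
    {s : Finset ι} {s' : Finset κ} {a : ι → R} {b : κ → R}
    (h : ∏ i ∈ s, (X - C (a i)) = ∏ j ∈ s', (X - C (b j))) (g : R → R) :
    ∏ i ∈ s, (X - C (g (a i))) = ∏ j ∈ s', (X - C (g (b j))) := by
  have hroots : s.val.map a = s'.val.map b := by
    rw [← roots_multiset_prod_X_sub_C (s.val.map a), ← roots_multiset_prod_X_sub_C (s'.val.map b),
      Multiset.map_map, Multiset.map_map]
    exact congrArg roots h
  have := congrArg (fun m => (m.map fun x => X - C (g x)).prod) hroots
  simp only [Multiset.map_map] at this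
  exact this

theorem pos_add_of_mem_uIcc {p t s : ℝ} (hp : 0 < p) (hT : 0 < t + p) (hs : s ∈ uIcc 0 t) :
    0 < s + p := by
  rcases le_total 0 t with h | h
  · rw [uIcc_of_le h] at hs; linarith [hs.1]
  · rw [uIcc_of_ge h] at hs; linarith [hs.1]

theorem continuousOn_exp_two_mul_log_div_mul {p t x : ℝ} (hp : 0 < p) (hT : 0 < t + p) :
    ContinuousOn (fun s => exp (2 * log ((t + p) / (s + p)) * x)) (uIcc 0 t) := by
  have hpos := fun s (hs : s ∈ uIcc 0 t) => pos_add_of_mem_uIcc hp hT hs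
  refine ((continuousOn_const.mul (ContinuousOn.log ?_ ?_)).mul continuousOn_const).rexp
  · exact continuousOn_const.div (by fun_prop) fun s hs => (hpos s hs).ne'
  · exact fun s hs => (div_pos hT (hpos s hs)).ne'

theorem hasDerivAt_mul_inv_mul_exp_log_div {T u x : ℝ} (hT : 0 < T) (hu : 0 < u)
    (hx : 1 - 2 * x ≠ 0) :
    HasDerivAt (fun u => T * ((1 - 2 * x)⁻¹ * exp (log (u / T) * (1 - 2 * x))))
      (exp (2 * log (T / u) * x)) u := by
  have hlog : HasDerivAt (fun u => log (u / T)) u⁻¹ u :=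
    (((hasDerivAt_id u).div_const T).log (div_pos hu hT).ne').congr_deriv (by simp [field])
  refine ((((hlog.mul_const (1 - 2 * x)).exp).const_mul (1 - 2 * x)⁻¹).const_mul T).congr_deriv ?_
  set L := log (u / T)
  have hlog_inv : log (T / u) = -L := by rw [← log_inv, inv_div]
  have hTu : T * u⁻¹ = exp (-L) := by rw [← div_eq_mul_inv, ← hlog_inv, exp_log (div_pos hT hu)]
  calc T * ((1 - 2 * x)⁻¹ * (exp (L * (1 - 2 * x)) * (u⁻¹ * (1 - 2 * x))))
      = T * u⁻¹ * exp (L * (1 - 2 * x)) * ((1 - 2 * x)⁻¹ * (1 - 2 * x)) := by ring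
    _ = exp (-L + L * (1 - 2 * x)) := by rw [hTu, inv_mul_cancel₀ hx, mul_one, exp_add]
    _ = exp (2 * log (T / u) * x) := by rw [hlog_inv]; ring_nf

theorem integral_exp_two_mul_log_div_mul {p t x : ℝ} (hp : 0 < p) (hT : 0 < t + p)
    (hx : 1 - 2 * x ≠ 0) :
    ∫ s in (0:ℝ)..t, exp (2 * log ((t + p) / (s + p)) * x)
      = (t + p) * ((1 - 2 * x)⁻¹ * (1 - exp (log (p / (t + p)) * (1 - 2 * x)))) := by
  have hderiv (s : ℝ) (hs : s ∈ uIcc 0 t) :=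
    (hasDerivAt_mul_inv_mul_exp_log_div hT (pos_add_of_mem_uIcc hp hT hs) hx).comp_add_const s p
  rw [intervalIntegral.integral_eq_sub_of_hasDerivAt hderiv
    (continuousOn_exp_two_mul_log_div_mul hp hT).intervalIntegrable]
  simp only [zero_add, div_self hT.ne', log_one, zero_mul, exp_zero]
  ring

theorem mul_inv_mul_one_sub_exp_log_div_eq {T c : ℝ} (hT : 0 < T) (hc : c ≠ 0) (k : ℕ) :
    T * ((2 * ((k : ℝ) + 1))⁻¹ * (1 - exp (log (c ^ 2 / T) * (2 * ((k : ℝ) + 1)))))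
      = (1 / (2 * ((k : ℝ) + 1))) * (T ^ (2 * (k + 1)) - c ^ (4 * (k + 1)))
          / T ^ (2 * (k + 1) - 1) := by
  have hexp : exp (log (c ^ 2 / T) * (2 * ((k : ℝ) + 1))) = (c ^ 2 / T) ^ (2 * (k + 1)) := by
    rw [← rpow_def_of_pos (by positivity), ← rpow_natCast (c ^ 2 / T)]
    norm_num
  have hpow : T ^ (2 * (k + 1)) = T ^ (2 * (k + 1) - 1) * T := by
    rw [← pow_succ]; congr 1
  rw [hexp, div_pow, ← pow_mul, hpow]
  field_simp
  ring

theorem Matrix.exists_eq_of_mem_spectrum_of_charpoly_eq {ι n K : Type*} [Field K] [Fintype n]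
    [DecidableEq n] {M : Matrix n n K} {s : Finset ι} {a : ι → K}
    (h : M.charpoly = ∏ k ∈ s, (X - C (a k))) {μ : K} (hμ : μ ∈ spectrum K M) :
    ∃ k ∈ s, μ = a k := by
  rw [Matrix.mem_spectrum_iff_isRoot_charpoly, h, IsRoot, eval_prod, Finset.prod_eq_zero_iff] at hμ
  obtain ⟨k, hk, hroot⟩ := hμ
  rw [eval_sub, eval_X, eval_C, sub_eq_zero] at hroot
  exact ⟨k, hk, hroot⟩

namespace Matrix.IsHermitian

variable {n : Type*} [Fintype n] [DecidableEq n] {A : Matrix n n ℝ}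

-- `NormedSpace.exp` does not depend on the norm; the L2 operator norm is chosen because it is
-- compatible with the continuous functional calculus of Hermitian matrices.
open scoped Matrix.Norms.L2Operator in
theorem exp_smul_eq_cfc (hA : A.IsHermitian) (r : ℝ) :
    NormedSpace.exp (r • A) = cfc (fun x => Real.exp (r * x)) A := by
  rw [← CFC.real_exp_eq_normedSpace_exp, ← cfc_comp_smul r Real.exp A]
  rfl

theorem inv_eq_cfc (hA : A.IsHermitian) (h0 : ∀ x ∈ spectrum ℝ A, x ≠ 0) :
    A⁻¹ = cfc (fun x : ℝ => x⁻¹) A := by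
  have := cfc_inv id A h0
  rw [cfc_id ℝ A] at this
  exact A.nonsing_inv_eq_ringInverse.trans this.symm

theorem cfc_one_sub_two_mul (hA : A.IsHermitian) :
    cfc (fun x : ℝ => 1 - 2 * x) A = 1 - 2 • A := by
  rw [cfc_sub .., cfc_const_one .., cfc_const_mul .., cfc_id' ℝ A, ofNat_smul_eq_nsmul]

theorem smul_inv_mul_one_sub_exp_eq_cfc (hA : A.IsHermitian) (h0 : ∀ x ∈ spectrum ℝ A, x ≠ 0)
    (T ℓ : ℝ) :
    T • (A⁻¹ * (1 - NormedSpace.exp (ℓ • A)))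
      = cfc (fun x => T * (x⁻¹ * (1 - Real.exp (ℓ * x)))) A := by
  have hinv : ContinuousOn (fun x : ℝ => x⁻¹) (spectrum ℝ A) := continuousOn_inv₀.mono h0
  rw [cfc_const_mul .., cfc_mul .., cfc_sub .., cfc_const_one .., hA.inv_eq_cfc h0,
    hA.exp_smul_eq_cfc]

theorem cfc_apply_eq_sum (hA : A.IsHermitian) (f : ℝ → ℝ) (i j : n) :
    cfc f A i j = ∑ k, hA.eigenvectorUnitary.1 i k * f (hA.eigenvalues k)
      * hA.eigenvectorUnitary.1 j k := by
  simp [hA.cfc_eq, IsHermitian.cfc, Unitary.conjStarAlgAut_apply, mul_apply, diagonal_apply]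

theorem of_intervalIntegral_cfc {h : ℝ → ℝ → ℝ} {a b : ℝ} (hA : A.IsHermitian)
    (hint : ∀ x ∈ spectrum ℝ A, IntervalIntegrable (h · x) MeasureTheory.volume a b) :
    Matrix.of (fun i j => ∫ s in a..b, cfc (h s) A i j)
      = cfc (fun x => ∫ s in a..b, h s x) A := by
  ext i j
  simp only [of_apply, hA.cfc_apply_eq_sum]
  rw [intervalIntegral.integral_finsetSum]
  · simp only [intervalIntegral.integral_const_mul, intervalIntegral.integral_mul_const]
  · intro k _
    exact ((hint _ (hA.eigenvalues_mem_spectrum_real k)).const_mul _).mul_const _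

end Matrix.IsHermitian

theorem statement11 (N : ℕ) (A : Matrix (Fin N) (Fin N) ℝ)
    (hsymm : A.IsSymm)
    (heig : (1 - 2 • A).charpoly
      = ∏ k ∈ Finset.range N, (X - C (2 * ((k : ℝ) + 1))))
    (c t : ℝ) (hc : 0 < c) (ht : 0 < t) :
    (Matrix.of fun i j =>
        ∫ s in (0:ℝ)..t,
          (NormedSpace.exp ((2 * Real.log ((t + c^2)/(s + c^2))) • A)) i j)
      = (t + c^2) •
        ((1 - 2 • A)⁻¹ *
          (1 - NormedSpace.exp (Real.log (c^2/(t + c^2)) • (1 - 2 • A)))) ∧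
    ((t + c^2) •
        ((1 - 2 • A)⁻¹ *
          (1 - NormedSpace.exp (Real.log (c^2/(t + c^2)) • (1 - 2 • A))))).IsSymm ∧
    ((t + c^2) •
        ((1 - 2 • A)⁻¹ *
          (1 - NormedSpace.exp (Real.log (c^2/(t + c^2)) • (1 - 2 • A))))).charpoly
      = ∏ k ∈ Finset.range N,
          (X - C ((1/(2*((k:ℝ)+1))) * ((t + c^2)^(2*(k+1)) - c^(4*(k+1)))
            / (t + c^2)^(2*(k+1) - 1))) := by
  have hA : A.IsHermitian := Matrix.isHermitian_iff_isSymm.mpr hsymm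
  have hM : (1 - 2 • A).IsHermitian := hA.cfc_one_sub_two_mul ▸ cfc_predicate _ A
  have hc2 : 0 < c ^ 2 := by positivity
  have hT : 0 < t + c ^ 2 := by positivity
  have hM_ne_zero : ∀ μ ∈ spectrum ℝ (1 - 2 • A), μ ≠ 0 := fun μ hμ => by
    obtain ⟨k, -, rfl⟩ := Matrix.exists_eq_of_mem_spectrum_of_charpoly_eq heig hμ
    positivity
  rw [hM.smul_inv_mul_one_sub_exp_eq_cfc hM_ne_zero]
  refine ⟨?_, Matrix.isHermitian_iff_isSymm.mp (cfc_predicate _ _), ?_⟩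
  · simp_rw [hA.exp_smul_eq_cfc]
    rw [hA.of_intervalIntegral_cfc fun x _ =>
        (continuousOn_exp_two_mul_log_div_mul hc2 hT).intervalIntegrable,
      ← hA.cfc_one_sub_two_mul, ← cfc_comp' _ _ _ ((A.finite_real_spectrum.image _).continuousOn _)]
    refine cfc_congr fun x hx => integral_exp_two_mul_log_div_mul hc2 hT (hM_ne_zero _ ?_)
    rw [← hA.cfc_one_sub_two_mul, cfc_map_spectrum ..]
    exact Set.mem_image_of_mem _ hx
  · have heig' := hM.charpoly_eq.symm.trans heig
    rw [hM.charpoly_cfc_eq]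
    simp only [RCLike.ofReal_real_eq_id, id] at heig' ⊢
    rw [prod_X_sub_C_comp_eq_of_eq heig'
      (fun μ => (t + c ^ 2) * (μ⁻¹ * (1 - Real.exp (Real.log (c ^ 2 / (t + c ^ 2)) * μ))))]
    exact Finset.prod_congr rfl fun k _ => by rw [mul_inv_mul_one_sub_exp_log_div_eq hT hc.ne' k]
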